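/- arXiv:1809.00271 — 2 statements merged into one kernel-verified Lean document; each statement's English description precedes it below -/
import Mathlib

section
/- For every d ≥ 1 the following recursion holds in ℚ[u,τ]: ∂ᵤ([t^{d+1}]S^{d+1}/(d+1)!) = [tᵈ]Sᵈ/d! + (τ/d)·∂ᵤ([tᵈ]Sᵈ/d!). -/
open scoped BigOperators

noncomputable section

/-- `Q2 = ℚ[u, τ]`, realized with outer variable `u` and inner variable `τ`. -/
abbrev Q2 : Type := Polynomial (Polynomial ℚ)

/-- the variable `u` -/
def uQ : Q2 := Polynomial.X

/-- the variable `τ` -/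
def tauQ : Q2 := Polynomial.C Polynomial.X

/-- `log F = Σ_{k≥1} (−1)^{k+1}(F−1)ᵏ/k` for a power series `F` with constant term 1
(the coefficient of `tᴺ` only receives contributions from `k ≤ N` since `F − 1` has
positive `t`-order). -/
def logPS (F : PowerSeries Q2) : PowerSeries Q2 :=
  PowerSeries.mk fun N => ∑ k ∈ Finset.Icc 1 N,
    ((-1 : ℚ) ^ (k + 1) / (k : ℚ)) • PowerSeries.coeff (R := Q2) N ((F - 1) ^ k)

/-- `S` is the symbol of the dispersionless ILW Lax operator: the power series in `t`
with constant term 1 satisfying `S = 1 + t·(u + τ·log S)`. -/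
def IsILWSymbol (S : PowerSeries Q2) : Prop :=
  PowerSeries.constantCoeff (R := Q2) S = 1 ∧
  S = 1 + PowerSeries.X * (PowerSeries.C (R := Q2) uQ + PowerSeries.C (R := Q2) tauQ * logPS S)
/-- `∂ᵤ` acting coefficientwise on `ℚ[u,τ][[t]]` as `d/du` -/
def dU (F : PowerSeries Q2) : PowerSeries Q2 :=
  PowerSeries.mk fun N => Polynomial.derivative (PowerSeries.coeff (R := Q2) N F)

/-!
Differentiating `S = 1 + t (u + τ log S)` in `u` and using `S · ∂ᵤ log S = ∂ᵤ S` gives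
`S ∂ᵤ S = t (S + τ ∂ᵤ S)`. Multiplying by `d Sᵈ⁻¹` turns this into
`d ∂ᵤ (Sᵈ⁺¹) = (d + 1) t (d Sᵈ + τ ∂ᵤ (Sᵈ))`, and comparing coefficients of `tᵈ⁺¹` gives the
recursion. The identity `S · ∂ᵤ log S = ∂ᵤ S` holds modulo `tᴺ⁺¹` for every `N`: there `log S`
agrees with its truncation `∑_{k ≤ N} (-1)ᵏ⁺¹ (S - 1)ᵏ / k`, whose `u`-derivative is the
truncated geometric series `∑_{j < N} (1 - S)ʲ · ∂ᵤ S`.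
-/

open PowerSeries

theorem coeff_dU (F : PowerSeries Q2) (n : ℕ) :
    coeff n (dU F) = Polynomial.derivative (coeff n F) :=
  coeff_mk _ _

def dUDerivation : Derivation ℚ (PowerSeries Q2) (PowerSeries Q2) :=
  Derivation.mk'
    { toFun := dU
      map_add' := fun F G => PowerSeries.ext fun n => by simp [coeff_dU]
      map_smul' := fun c F => PowerSeries.ext fun n => by simp [coeff_dU] }
    fun F G => by
      change dU (F * G) = F * dU G + G * dU F
      rw [add_comm, mul_comm G]
      ext n
      simp only [coeff_dU, coeff_mul, map_add, map_sum, Polynomial.derivative_mul]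
      rw [Finset.sum_add_distrib]

@[simp]
theorem dUDerivation_apply (F : PowerSeries Q2) : dUDerivation F = dU F := rfl

@[simp]
theorem dU_one : dU (1 : PowerSeries Q2) = 0 := dUDerivation.map_one_eq_zero

@[simp]
theorem dU_C (a : Q2) : dU (C a) = C (Polynomial.derivative a) :=
  PowerSeries.ext fun n => by
    simp [coeff_dU, coeff_C, apply_ite Polynomial.derivative]

@[simp]
theorem dU_X : dU (X : PowerSeries Q2) = 0 :=
  PowerSeries.ext fun n => by simp [coeff_dU, coeff_X, apply_ite Polynomial.derivative]

theorem X_pow_dvd_dU {n : ℕ} {F : PowerSeries Q2} (h : X ^ n ∣ F) : X ^ n ∣ dU F :=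
  X_pow_dvd_iff.mpr fun m hm => by rw [coeff_dU, X_pow_dvd_iff.mp h m hm, map_zero]

theorem X_pow_dvd_logPS_sub {S : PowerSeries Q2} (hS : constantCoeff S = 1) (N : ℕ) :
    X ^ (N + 1) ∣ logPS S - ∑ k ∈ Finset.Icc 1 N, ((-1 : ℚ) ^ (k + 1) / k) • (S - 1) ^ k := by
  have hX : X ∣ S - 1 := X_dvd_iff.mpr (by simp [hS])
  refine X_pow_dvd_iff.mpr fun m hm => ?_
  rw [map_sub, logPS, coeff_mk, map_sum, sub_eq_zero]
  simp only [LinearMap.map_smul_of_tower]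
  refine Finset.sum_subset (Finset.Icc_subset_Icc_right (by omega)) fun k hk hkm => ?_
  have hmk : m < k := by simp only [Finset.mem_Icc] at hk hkm; omega
  rw [X_pow_dvd_iff.mp (pow_dvd_pow_of_dvd hX k) m hmk, smul_zero]

theorem dU_sum_Icc_smul_pow (W : PowerSeries Q2) (N : ℕ) :
    dU (∑ k ∈ Finset.Icc 1 N, ((-1 : ℚ) ^ (k + 1) / k) • W ^ k)
      = (∑ j ∈ Finset.range N, (-W) ^ j) * dU W := by
  rw [← dUDerivation_apply, map_sum, Finset.sum_mul, ← Finset.Ico_add_one_right_eq_Icc,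
    Finset.sum_Ico_eq_sum_range, add_tsub_cancel_right]
  refine Finset.sum_congr rfl fun j _ => ?_
  have hj : ((1 + j : ℕ) : ℚ) ≠ 0 := by positivity
  rw [Derivation.map_smul, Derivation.leibniz_pow, add_tsub_cancel_left, dUDerivation_apply,
    smul_eq_mul, ← Nat.cast_smul_eq_nsmul ℚ, smul_smul, ← neg_one_smul ℚ W, smul_pow,
    smul_mul_assoc]
  congr 1
  field_simp
  ring

theorem mul_dU_logPS {S : PowerSeries Q2} (hS : constantCoeff S = 1) :
    S * dU (logPS S) = dU S := by
  refine PowerSeries.ext fun N => sub_eq_zero.mp ?_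
  rw [← map_sub]
  refine X_pow_dvd_iff.mp ?_ N (Nat.lt_succ_self N)
  set W := S - 1
  set T := ∑ k ∈ Finset.Icc 1 N, ((-1 : ℚ) ^ (k + 1) / k) • W ^ k
  have hX : X ∣ W := X_dvd_iff.mpr (by simp [W, hS])
  have hSW : S = 1 - -W := by simp [W]
  have hdUS : dU S = dU W := by simp [W, ← dUDerivation_apply]
  have hsplit : S * dU (logPS S) - dU S = S * dU (logPS S - T) - (-W) ^ N * dU W := by
    rw [show dU (logPS S - T) = dU (logPS S) - dU T from map_sub dUDerivation _ _,
      dU_sum_Icc_smul_pow, hdUS]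
    linear_combination ((∑ j ∈ Finset.range N, (-W) ^ j) * dU W) * hSW
      + dU W * mul_neg_geom_sum (-W) N
  rw [hsplit, pow_succ]
  refine dvd_sub (dvd_mul_of_dvd_right (X_pow_dvd_dU (X_pow_dvd_logPS_sub hS N)) _)
    (mul_dvd_mul (pow_dvd_pow_of_dvd (dvd_neg.mpr hX) N) ?_)
  simpa using X_pow_dvd_dU (n := 1) (by simpa using hX)

theorem IsILWSymbol.dU_eq {S : PowerSeries Q2} (hS : IsILWSymbol S) :
    dU S = X * (1 + C tauQ * dU (logPS S)) := by
  conv_lhs => rw [hS.2]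
  simp only [← dUDerivation_apply, Derivation.leibniz, map_add, Derivation.map_one_eq_zero]
  simp [uQ, tauQ]

theorem IsILWSymbol.mul_dU {S : PowerSeries Q2} (hS : IsILWSymbol S) :
    S * dU S = X * (S + C tauQ * dU S) := by
  linear_combination S * hS.dU_eq + X * C tauQ * mul_dU_logPS hS.1

theorem IsILWSymbol.nsmul_pow_mul_dU {S : PowerSeries Q2} (hS : IsILWSymbol S) (d : ℕ) :
    d • (S ^ d * dU S) = X * (d • S ^ d + C tauQ * dU (S ^ d)) := by
  cases d with
  | zero => simp
  | succ e =>
    rw [← dUDerivation_apply (S ^ (e + 1)), Derivation.leibniz_pow, add_tsub_cancel_right,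
      dUDerivation_apply, smul_eq_mul]
    linear_combination (e + 1) • S ^ e * hS.mul_dU

theorem IsILWSymbol.nsmul_derivative_coeff_pow_succ {S : PowerSeries Q2} (hS : IsILWSymbol S)
    (d : ℕ) :
    d • Polynomial.derivative (coeff (d + 1) (S ^ (d + 1)))
      = (d + 1) • (d • coeff d (S ^ d) + tauQ * Polynomial.derivative (coeff d (S ^ d))) := by
  have h : d • dU (S ^ (d + 1)) = (d + 1) • (X * (d • S ^ d + C tauQ * dU (S ^ d))) := by
    rw [← dUDerivation_apply, Derivation.leibniz_pow, add_tsub_cancel_right, dUDerivation_apply,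
      smul_eq_mul, smul_comm, hS.nsmul_pow_mul_dU]
  simpa only [map_nsmul, coeff_dU, coeff_succ_X_mul, map_add, coeff_C_mul] using
    congrArg (coeff (d + 1)) h

/-- For every `d ≥ 1` the recursion holds in `ℚ[u,τ]`:
`∂ᵤ([t^{d+1}]S^{d+1}/(d+1)!) = [tᵈ]Sᵈ/d! + (τ/d)·∂ᵤ([tᵈ]Sᵈ/d!)`. -/
theorem ilw_stmt12 (S : PowerSeries Q2) (hS : IsILWSymbol S) (d : ℕ) (hd : 1 ≤ d) :
    Polynomial.derivative
        ((Nat.factorial (d + 1) : ℚ)⁻¹ • PowerSeries.coeff (R := Q2) (d + 1) (S ^ (d + 1)))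
      = (Nat.factorial d : ℚ)⁻¹ • PowerSeries.coeff (R := Q2) d (S ^ d)
        + (d : ℚ)⁻¹ • (tauQ *
            Polynomial.derivative
              ((Nat.factorial d : ℚ)⁻¹ • PowerSeries.coeff (R := Q2) d (S ^ d))) := by
  have hd0 : (d : ℚ) ≠ 0 := Nat.cast_ne_zero.mpr (by omega)
  have hrec := hS.nsmul_derivative_coeff_pow_succ d
  rw [← Nat.cast_smul_eq_nsmul ℚ d, ← Nat.cast_smul_eq_nsmul ℚ d,
    ← Nat.cast_smul_eq_nsmul ℚ (d + 1), ← eq_inv_smul_iff₀ hd0, smul_smul] at hrec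
  rw [Polynomial.derivative_smul, Polynomial.derivative_smul, hrec, Nat.factorial_succ,
    mul_smul_comm]
  match_scalars <;> field_simp
end
end

section
/- For every d ≥ 0 the closed formula holds in ℚ[u,τ]: [t^{d+1}]S^{d+1}/(d+1)! = Σ_{j=0}^{d} P_{d+1,j+1} τ^{d−j} u^{j+1}/(j+1)!. -/
open scoped BigOperators

noncomputable section

/-- the polynomial `P_d(y) = y·∏_{i=1}^{d−1}(y + τ/i) ∈ ℚ[y,τ]`
(outer variable `y`, inner variable `τ`) -/
def Ppoly (d : ℕ) : Polynomial (Polynomial ℚ) :=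
  Polynomial.X * ∏ i ∈ Finset.Icc 1 (d - 1),
    (Polynomial.X + Polynomial.C ((i : ℚ)⁻¹ • (Polynomial.X : Polynomial ℚ)))

/-- the rational numbers `P_{d,j}` defined by `P_d(y) = Σ_{j=1}^d P_{d,j} yʲ τ^{d−j}` -/
def Pcoef (d j : ℕ) : ℚ := ((Ppoly d).coeff j).coeff (d - j)


/-!
Write `a_d = [t^{d+1}]S^{d+1}/(d+1)!`. Differentiating `S = 1 + t(u + τ log S)` in `u` and
using `S · ∂ᵤ log S = ∂ᵤS` gives `S ∂ᵤS = tS + τt ∂ᵤS`, whence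
`∂ᵤ a_{d+1} = a_d + τ/(d+1) · ∂ᵤ a_d`. The closed form obeys the same recursion, because
`P_{d+2}(y) = P_{d+1}(y) (y + τ/(d+1))` and `∂ᵤ (uʲ/j!) = uʲ⁻¹/(j-1)!`. Both sides equal `u` for
`d = 0` and vanish at `u = 0` (where `S` specializes to `1`), so they agree for all `d`.
-/

open scoped Polynomial

theorem Polynomial.eq_of_derivative_eq_of_coeff_zero_eq {R : Type*} [Ring R] [IsAddTorsionFree R]
    {p q : R[X]} (h : Polynomial.derivative p = Polynomial.derivative q)
    (h0 : p.coeff 0 = q.coeff 0) : p = q := by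
  have hC := Polynomial.eq_C_of_derivative_eq_zero (p := p - q) (by rw [map_sub, h, sub_self])
  rwa [Polynomial.coeff_sub, h0, sub_self, map_zero, sub_eq_zero] at hC

theorem PowerSeries.eq_of_forall_X_pow_dvd_sub {R : Type*} [CommRing R] {f g : PowerSeries R}
    (h : ∀ n, PowerSeries.X ^ (n + 1) ∣ f - g) : f = g := by
  refine sub_eq_zero.1 (PowerSeries.ext fun n => ?_)
  simpa using PowerSeries.X_pow_dvd_iff.1 (h n) n n.lt_succ_self

section CoeffDerivative

variable {R : Type*} [CommSemiring R]

def coeffDerivative : PowerSeries R[X] →+ PowerSeries R[X] where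
  toFun F := PowerSeries.mk fun n => Polynomial.derivative (PowerSeries.coeff n F)
  map_zero' := by ext; simp
  map_add' F G := by ext; simp

@[simp]
theorem coeff_coeffDerivative (F : PowerSeries R[X]) (n : ℕ) :
    PowerSeries.coeff n (coeffDerivative F) = Polynomial.derivative (PowerSeries.coeff n F) := by
  simp [coeffDerivative]

theorem coeffDerivative_mul (F G : PowerSeries R[X]) :
    coeffDerivative (F * G) = coeffDerivative F * G + F * coeffDerivative G := by
  ext n
  simp only [coeff_coeffDerivative, PowerSeries.coeff_mul, map_add, map_sum,
    Polynomial.derivative_mul, Finset.sum_add_distrib]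

theorem coeffDerivative_C (p : R[X]) :
    coeffDerivative (PowerSeries.C p) = PowerSeries.C (Polynomial.derivative p) := by
  ext n
  simp only [coeff_coeffDerivative, PowerSeries.coeff_C]
  split_ifs <;> simp

@[simp]
theorem coeffDerivative_one : coeffDerivative (1 : PowerSeries R[X]) = 0 := by
  rw [← map_one PowerSeries.C, coeffDerivative_C, Polynomial.derivative_one, map_zero]

theorem coeffDerivative_X_mul (F : PowerSeries R[X]) :
    coeffDerivative (PowerSeries.X * F) = PowerSeries.X * coeffDerivative F := by
  ext (_ | n) <;> simp [PowerSeries.coeff_succ_X_mul]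

theorem coeffDerivative_pow_succ (F : PowerSeries R[X]) (k : ℕ) :
    coeffDerivative (F ^ (k + 1)) = (k + 1) • (F ^ k * coeffDerivative F) := by
  induction k with
  | zero => simp
  | succ k ih =>
    rw [pow_succ, coeffDerivative_mul, ih]
    ring

theorem X_pow_dvd_coeffDerivative {F : PowerSeries R[X]} {n : ℕ}
    (h : PowerSeries.X ^ n ∣ F) : PowerSeries.X ^ n ∣ coeffDerivative F := by
  rw [PowerSeries.X_pow_dvd_iff] at h ⊢
  intro m hm
  simp [h m hm]

end CoeffDerivative

theorem X_dvd_coeffDerivative {R : Type*} [CommRing R] {F : PowerSeries R[X]}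
    (hF : PowerSeries.X ∣ F - 1) : PowerSeries.X ∣ coeffDerivative F := by
  have h := X_pow_dvd_coeffDerivative (n := 1) (by simpa using hF)
  rwa [pow_one, map_sub, coeffDerivative_one, sub_zero] at h

def logPartialSum (F : PowerSeries Q2) (N : ℕ) : PowerSeries Q2 :=
  ∑ k ∈ Finset.Icc 1 N, ((-1 : ℚ) ^ (k + 1) / (k : ℚ)) • (F - 1) ^ k

theorem X_pow_dvd_logPS_sub_logPartialSum {F : PowerSeries Q2} (hF : PowerSeries.X ∣ F - 1)
    (N : ℕ) : PowerSeries.X ^ (N + 1) ∣ logPS F - logPartialSum F N := by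
  refine PowerSeries.X_pow_dvd_iff.2 fun m hm => ?_
  rw [map_sub, sub_eq_zero, logPS, logPartialSum, PowerSeries.coeff_mk, map_sum]
  refine Finset.sum_subset (Finset.Icc_subset_Icc_right (by omega)) fun k hk hkm => ?_
  have hmk : m < k := by simp only [Finset.mem_Icc] at hk hkm; omega
  rw [PowerSeries.X_pow_dvd_iff.1 (pow_dvd_pow_of_dvd hF k) m hmk, smul_zero]

theorem coeffDerivative_logPartialSum (F : PowerSeries Q2) (N : ℕ) :
    coeffDerivative (logPartialSum F N)
      = ∑ j ∈ Finset.range N, (1 - F) ^ j * coeffDerivative F := by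
  induction N with
  | zero => simp [logPartialSum]
  | succ N ih =>
    rw [logPartialSum, Finset.sum_Icc_succ_top (by omega), map_add, ← logPartialSum, ih,
      Finset.sum_range_succ, map_rat_smul, coeffDerivative_pow_succ, map_sub,
      coeffDerivative_one, sub_zero, ← Nat.cast_smul_eq_nsmul ℚ, smul_smul]
    have hN : ((N + 1 : ℕ) : ℚ) ≠ 0 := by positivity
    have hc : (-1 : ℚ) ^ (N + 1 + 1) / ((N + 1 : ℕ) : ℚ) * ((N + 1 : ℕ) : ℚ) = (-1) ^ N := by
      field_simp; ring
    rw [hc, Algebra.smul_def]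
    simp only [map_pow, map_neg, map_one]
    rw [← mul_assoc, ← mul_pow, show -1 * (F - 1) = 1 - F by ring]

/-- Modulo `t^(N+1)`, `∂ᵤ log F` is the geometric sum `∑_{j<N} (1 - F)ʲ ∂ᵤF`, which `F` turns
into `∂ᵤF - (1 - F)ᴺ ∂ᵤF`. -/
theorem mul_coeffDerivative_logPS {F : PowerSeries Q2} (hF : PowerSeries.X ∣ F - 1) :
    F * coeffDerivative (logPS F) = coeffDerivative F := by
  refine PowerSeries.eq_of_forall_X_pow_dvd_sub fun N => ?_
  have hgeom : F * coeffDerivative (logPartialSum F N)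
      = coeffDerivative F - (1 - F) ^ N * coeffDerivative F := by
    rw [coeffDerivative_logPartialSum, ← Finset.sum_mul, ← mul_assoc]
    have hsum := mul_neg_geom_sum (1 - F) N
    rw [sub_sub_cancel] at hsum
    rw [hsum, sub_mul, one_mul]
  have htail : PowerSeries.X ^ (N + 1) ∣ (1 - F) ^ N * coeffDerivative F := by
    rw [pow_succ]
    exact mul_dvd_mul (pow_dvd_pow_of_dvd (by rw [← neg_sub]; exact dvd_neg.2 hF) N)
      (X_dvd_coeffDerivative hF)
  have hlog := X_pow_dvd_coeffDerivative (X_pow_dvd_logPS_sub_logPartialSum hF N)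
  rw [map_sub] at hlog
  have hsplit : F * coeffDerivative (logPS F) - coeffDerivative F
      = F * (coeffDerivative (logPS F) - coeffDerivative (logPartialSum F N))
        - (1 - F) ^ N * coeffDerivative F := by
    rw [mul_sub, hgeom]; ring
  rw [hsplit]
  exact dvd_sub (dvd_mul_of_dvd_right hlog F) htail

theorem map_logPS (φ : Q2 →+* Q2) (F : PowerSeries Q2) :
    PowerSeries.map φ (logPS F) = logPS (PowerSeries.map φ F) := by
  refine PowerSeries.ext fun N => ?_
  simp only [logPS, PowerSeries.coeff_map, PowerSeries.coeff_mk, map_sum, map_rat_smul]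
  refine Finset.sum_congr rfl fun k _ => ?_
  rw [← PowerSeries.coeff_map, map_pow, map_sub, map_one]

theorem X_pow_dvd_logPS {F : PowerSeries Q2} {n : ℕ} (hF : PowerSeries.X ^ n ∣ F - 1) :
    PowerSeries.X ^ n ∣ logPS F := by
  refine PowerSeries.X_pow_dvd_iff.2 fun m hm => ?_
  rw [logPS, PowerSeries.coeff_mk]
  refine Finset.sum_eq_zero fun k hk => ?_
  have hn : PowerSeries.X ^ n ∣ (F - 1) ^ k :=
    hF.trans (dvd_pow_self _ (by simp only [Finset.mem_Icc] at hk; omega))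
  rw [PowerSeries.X_pow_dvd_iff.1 hn m hm, smul_zero]

theorem eq_one_of_eq_one_add_X_mul_logPS {T : PowerSeries Q2} (c : Q2)
    (h : T = 1 + PowerSeries.X * (PowerSeries.C c * logPS T)) : T = 1 := by
  have hdvd : ∀ n, PowerSeries.X ^ n ∣ T - 1 := by
    intro n
    induction n with
    | zero => exact one_dvd _
    | succ n ih =>
      rw [h, add_sub_cancel_left, pow_succ']
      exact mul_dvd_mul_left _ (dvd_mul_of_dvd_right (X_pow_dvd_logPS ih) _)
  exact PowerSeries.eq_of_forall_X_pow_dvd_sub fun n => hdvd (n + 1)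

def uZero : Q2 →+* Q2 := Polynomial.C.comp Polynomial.constantCoeff

def diagCoeff (S : PowerSeries Q2) (d : ℕ) : Q2 :=
  ((d + 1).factorial : ℚ)⁻¹ • PowerSeries.coeff (d + 1) (S ^ (d + 1))

namespace IsILWSymbol

variable {S : PowerSeries Q2} (hS : IsILWSymbol S)
include hS

theorem X_dvd_sub_one : PowerSeries.X ∣ S - 1 := by
  rw [hS.2, add_sub_cancel_left]
  exact dvd_mul_right _ _

theorem map_uZero : PowerSeries.map uZero S = 1 := by
  refine eq_one_of_eq_one_add_X_mul_logPS (uZero tauQ) ?_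
  conv_lhs => rw [hS.2]
  simp [map_logPS, uZero, uQ]

theorem mul_coeffDerivative :
    S * coeffDerivative S
      = PowerSeries.X * S + PowerSeries.C tauQ * (PowerSeries.X * coeffDerivative S) := by
  have hD : coeffDerivative S
      = PowerSeries.X * (1 + PowerSeries.C tauQ * coeffDerivative (logPS S)) := by
    conv_lhs => rw [hS.2]
    rw [map_add, coeffDerivative_one, coeffDerivative_X_mul, map_add, coeffDerivative_mul,
      coeffDerivative_C, coeffDerivative_C]
    simp [uQ, tauQ]
  calc S * coeffDerivative S
      = PowerSeries.X * (S + PowerSeries.C tauQ * (S * coeffDerivative (logPS S))) := by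
        rw [hD]; ring
    _ = _ := by rw [mul_coeffDerivative_logPS hS.X_dvd_sub_one]; ring

theorem coeff_one : PowerSeries.coeff 1 S = uQ := by
  rw [hS.2]
  simp [logPS]

theorem diagCoeff_zero : diagCoeff S 0 = uQ := by
  simp [diagCoeff, hS.coeff_one]

theorem coeff_zero_diagCoeff (d : ℕ) : (diagCoeff S d).coeff 0 = 0 := by
  have h : uZero (diagCoeff S d) = 0 := by
    rw [diagCoeff, map_rat_smul, ← PowerSeries.coeff_map, map_pow, hS.map_uZero, one_pow,
      PowerSeries.coeff_one, if_neg d.succ_ne_zero, smul_zero]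
  simpa [uZero] using h

theorem derivative_diagCoeff_succ (d : ℕ) :
    Polynomial.derivative (diagCoeff S (d + 1))
      = diagCoeff S d + ((d + 1 : ℚ))⁻¹ • (tauQ * Polynomial.derivative (diagCoeff S d)) := by
  simp only [diagCoeff, Polynomial.derivative_smul]
  set A := PowerSeries.coeff (d + 1) (S ^ (d + 1))
  set B := PowerSeries.coeff (d + 1) (S ^ d * coeffDerivative S)
  have hA : Polynomial.derivative A = (d + 1) • B := by
    rw [← coeff_coeffDerivative, coeffDerivative_pow_succ, map_nsmul]
  have hA_succ : Polynomial.derivative (PowerSeries.coeff (d + 2) (S ^ (d + 2)))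
      = (d + 2) • (A + tauQ * B) := by
    rw [← coeff_coeffDerivative, coeffDerivative_pow_succ, map_nsmul, pow_succ, mul_assoc,
      hS.mul_coeffDerivative, show S ^ d * (PowerSeries.X * S + PowerSeries.C tauQ *
        (PowerSeries.X * coeffDerivative S)) = PowerSeries.X * (S ^ (d + 1) + PowerSeries.C tauQ *
        (S ^ d * coeffDerivative S)) by ring, PowerSeries.coeff_succ_X_mul, map_add,
      PowerSeries.coeff_C_mul]
  rw [hA, hA_succ]
  simp only [← Nat.cast_smul_eq_nsmul ℚ, mul_smul_comm, Nat.factorial_succ]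
  push_cast
  match_scalars <;> field_simp <;> ring

end IsILWSymbol

def dividedPowerSum (c : ℕ → ℚ) (n : ℕ) : Q2 :=
  ∑ j ∈ Finset.range (n + 1), c j • (tauQ ^ (n - j) * ((j.factorial : ℚ)⁻¹ • uQ ^ j))

theorem derivative_factorial_inv_smul_uQ_pow (j : ℕ) :
    Polynomial.derivative (((j + 1).factorial : ℚ)⁻¹ • uQ ^ (j + 1))
      = (j.factorial : ℚ)⁻¹ • uQ ^ j := by
  rw [Polynomial.derivative_smul, uQ, Polynomial.derivative_X_pow, map_natCast,
    ← nsmul_eq_mul, ← Nat.cast_smul_eq_nsmul ℚ, smul_smul, Nat.add_sub_cancel]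
  congr 1
  rw [Nat.factorial_succ]
  push_cast
  field_simp

theorem derivative_tauQ_pow_mul (k : ℕ) (p : Q2) :
    Polynomial.derivative (tauQ ^ k * p) = tauQ ^ k * Polynomial.derivative p := by
  rw [tauQ, ← map_pow, Polynomial.derivative_C_mul]

theorem derivative_dividedPowerSum_succ (c : ℕ → ℚ) (n : ℕ) :
    Polynomial.derivative (dividedPowerSum c (n + 1))
      = dividedPowerSum (fun j => c (j + 1)) n := by
  rw [dividedPowerSum, Finset.sum_range_succ', map_add, map_sum]
  have h0 : Polynomial.derivative (c 0 • (tauQ ^ (n + 1 - 0) * ((Nat.factorial 0 : ℚ)⁻¹ • uQ ^ 0)))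
      = 0 := by
    rw [pow_zero, Polynomial.derivative_smul, derivative_tauQ_pow_mul, Polynomial.derivative_smul,
      Polynomial.derivative_one, smul_zero, mul_zero, smul_zero]
  rw [h0, add_zero]
  refine Finset.sum_congr rfl fun j _ => ?_
  rw [Polynomial.derivative_smul, derivative_tauQ_pow_mul, derivative_factorial_inv_smul_uQ_pow,
    Nat.add_sub_add_right]

theorem dividedPowerSum_add_smul (c c' : ℕ → ℚ) (a : ℚ) (n : ℕ) :
    dividedPowerSum (fun j => c j + a * c' j) n
      = dividedPowerSum c n + a • dividedPowerSum c' n := by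
  simp only [dividedPowerSum, add_smul, mul_smul, Finset.sum_add_distrib, Finset.smul_sum]

theorem tauQ_mul_dividedPowerSum {c : ℕ → ℚ} {n : ℕ} (hc : c (n + 1) = 0) :
    tauQ * dividedPowerSum c n = dividedPowerSum c (n + 1) := by
  rw [dividedPowerSum, dividedPowerSum, Finset.sum_range_succ _ (n + 1), hc, zero_smul, add_zero,
    Finset.mul_sum]
  refine Finset.sum_congr rfl fun j hj => ?_
  rw [mul_smul_comm, ← mul_assoc, ← pow_succ', Nat.sub_add_comm (Finset.mem_range_succ_iff.1 hj)]

theorem coeff_zero_dividedPowerSum {c : ℕ → ℚ} (hc : c 0 = 0) (n : ℕ) :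
    (dividedPowerSum c n).coeff 0 = 0 := by
  rw [dividedPowerSum, Finset.sum_range_succ', hc, zero_smul, add_zero,
    Polynomial.finsetSum_coeff]
  refine Finset.sum_eq_zero fun j _ => ?_
  simp [uQ, tauQ, ← map_pow]

theorem Ppoly_succ_succ (n : ℕ) :
    Ppoly (n + 2) = Ppoly (n + 1) *
      (Polynomial.X + Polynomial.C (((n + 1 : ℕ) : ℚ)⁻¹ • (Polynomial.X : Polynomial ℚ))) := by
  rw [Ppoly, Ppoly, show n + 2 - 1 = n + 1 from rfl, Nat.add_sub_cancel,
    Finset.prod_Icc_succ_top (by omega), mul_assoc]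

theorem natDegree_Ppoly_succ_le (n : ℕ) : (Ppoly (n + 1)).natDegree ≤ n + 1 := by
  induction n with
  | zero => simp [Ppoly]
  | succ n ih =>
    rw [Ppoly_succ_succ]
    exact Polynomial.natDegree_mul_le.trans (by rw [Polynomial.natDegree_X_add_C]; omega)

theorem Pcoef_zero (d : ℕ) : Pcoef d 0 = 0 := by
  simp [Pcoef, Ppoly]

theorem Pcoef_one_one : Pcoef 1 1 = 1 := by
  simp [Pcoef, Ppoly]

theorem Pcoef_succ_of_lt {n j : ℕ} (h : n + 1 < j) : Pcoef (n + 1) j = 0 := by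
  rw [Pcoef, Polynomial.coeff_eq_zero_of_natDegree_lt ((natDegree_Ppoly_succ_le n).trans_lt h),
    Polynomial.coeff_zero]

theorem Pcoef_succ_succ (d j : ℕ) :
    Pcoef (d + 2) (j + 1) = Pcoef (d + 1) j + ((d + 1 : ℚ))⁻¹ * Pcoef (d + 1) (j + 1) := by
  have hcoeff : (Ppoly (d + 2)).coeff (j + 1) = (Ppoly (d + 1)).coeff j
      + ((d + 1 : ℚ))⁻¹ • ((Ppoly (d + 1)).coeff (j + 1) * Polynomial.X) := by
    rw [Ppoly_succ_succ, mul_add, Polynomial.coeff_add, Polynomial.coeff_mul_X,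
      Polynomial.coeff_mul_C, mul_smul_comm]
    push_cast; rfl
  rcases le_or_gt j d with hj | hj
  · obtain ⟨k, rfl⟩ := Nat.exists_eq_add_of_le hj
    rw [Pcoef, Pcoef, Pcoef, hcoeff, Polynomial.coeff_add, Polynomial.coeff_smul,
      show j + k + 2 - (j + 1) = k + 1 by omega, show j + k + 1 - j = k + 1 by omega,
      show j + k + 1 - (j + 1) = k by omega, Polynomial.coeff_mul_X, smul_eq_mul]
  · rw [Pcoef_succ_of_lt (by omega : d + 1 < j + 1), mul_zero, add_zero, Pcoef, Pcoef, hcoeff,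
      show d + 2 - (j + 1) = 0 by omega, show d + 1 - j = 0 by omega, Polynomial.coeff_add,
      Polynomial.coeff_smul, Polynomial.mul_coeff_zero, Polynomial.coeff_X_zero, mul_zero,
      smul_zero, add_zero]

def closedForm (d : ℕ) : Q2 := dividedPowerSum (Pcoef (d + 1)) (d + 1)

theorem closedForm_zero : closedForm 0 = uQ := by
  simp [closedForm, dividedPowerSum, Finset.sum_range_succ, Pcoef_zero, Pcoef_one_one]

theorem coeff_zero_closedForm (d : ℕ) : (closedForm d).coeff 0 = 0 :=
  coeff_zero_dividedPowerSum (Pcoef_zero _) _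

theorem derivative_closedForm_succ (d : ℕ) :
    Polynomial.derivative (closedForm (d + 1))
      = closedForm d + ((d + 1 : ℚ))⁻¹ • (tauQ * Polynomial.derivative (closedForm d)) := by
  rw [closedForm, closedForm, derivative_dividedPowerSum_succ, derivative_dividedPowerSum_succ,
    tauQ_mul_dividedPowerSum (c := fun j => Pcoef (d + 1) (j + 1)) (Pcoef_succ_of_lt (by omega)),
    ← dividedPowerSum_add_smul]
  simp only [Pcoef_succ_succ]

theorem closedForm_eq_sum (d : ℕ) :
    closedForm d = ∑ j ∈ Finset.range (d + 1), Pcoef (d + 1) (j + 1) •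
      (tauQ ^ (d - j) * ((Nat.factorial (j + 1) : ℚ)⁻¹ • uQ ^ (j + 1))) := by
  rw [closedForm, dividedPowerSum, Finset.sum_range_succ', Pcoef_zero, zero_smul, add_zero]
  simp only [Nat.add_sub_add_right]

/-- For every `d ≥ 0` the closed formula holds in `ℚ[u,τ]`:
`[t^{d+1}]S^{d+1}/(d+1)! = Σ_{j=0}^{d} P_{d+1,j+1} τ^{d−j} u^{j+1}/(j+1)!`. -/
theorem ilw_stmt14 (S : PowerSeries Q2) (hS : IsILWSymbol S) (d : ℕ) :
    (Nat.factorial (d + 1) : ℚ)⁻¹ • PowerSeries.coeff (R := Q2) (d + 1) (S ^ (d + 1))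
      = ∑ j ∈ Finset.range (d + 1),
          Pcoef (d + 1) (j + 1) •
            (tauQ ^ (d - j) * ((Nat.factorial (j + 1) : ℚ)⁻¹ • uQ ^ (j + 1))) := by
  suffices ∀ n, diagCoeff S n = closedForm n from (this d).trans (closedForm_eq_sum d)
  intro n
  induction n with
  | zero => rw [hS.diagCoeff_zero, closedForm_zero]
  | succ n ih =>
    refine Polynomial.eq_of_derivative_eq_of_coeff_zero_eq ?_ ?_
    · rw [hS.derivative_diagCoeff_succ, derivative_closedForm_succ, ih]
    · rw [hS.coeff_zero_diagCoeff, coeff_zero_closedForm]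
end
end
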